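/- arXiv:1208.2870 — 7 statements merged into one kernel-verified Lean document; each statement's English description precedes it below -/
import Mathlib

section
/- Let A₁, A₂, Y₁, Y₂ be real-valued square-integrable random variables on a probability space such that the pair (A₁, A₂) is independent of the pair (Y₁, Y₂), with E[A₁] = E[A₂] = μ_A and E[Y₁] = E[Y₂] = μ_Y, and write c_A = Cov(A₁, A₂) and c_Y = Cov(Y₁, Y₂). Then Cov(A₁·Y₁, A₂·Y₂) = (c_A + μ_A²)·c_Y + c_A·μ_Y². (This is Lemma 1 of the paper: for stationary independent processes A(t) and Y(t) and W(t) = A(t)Y(t), the autocovariance satisfies c_W(τ) = (c_A(τ) + μ_A²)c_Y(τ) + c_A(τ)μ_Y².) -/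
open MeasureTheory ProbabilityTheory

/-! Independence of the pairs `(A₁, A₂)` and `(Y₁, Y₂)` makes `A₁A₂` independent of `Y₁Y₂` and
each `Aᵢ` independent of `Yᵢ`, so every mixed moment factors:
`E[A₁Y₁A₂Y₂] = E[A₁A₂]E[Y₁Y₂]` and `E[AᵢYᵢ] = μ_A μ_Y`. Substituting
`E[A₁A₂] = c_A + μ_A²` and `E[Y₁Y₂] = c_Y + μ_Y²` leaves a polynomial identity. -/

section

variable {Ω 𝕜 : Type*} [RCLike 𝕜] [MeasurableSpace Ω] {μ : Measure Ω} {A₁ A₂ Y₁ Y₂ : Ω → 𝕜}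

theorem ProbabilityTheory.IndepFun.integral_mul_mul_sub_integral_mul_mul
    (hindep : IndepFun (fun ω => (A₁ ω, A₂ ω)) (fun ω => (Y₁ ω, Y₂ ω)) μ)
    (hA₁ : AEStronglyMeasurable A₁ μ) (hA₂ : AEStronglyMeasurable A₂ μ)
    (hY₁ : AEStronglyMeasurable Y₁ μ) (hY₂ : AEStronglyMeasurable Y₂ μ) :
    (∫ ω, (A₁ ω * Y₁ ω) * (A₂ ω * Y₂ ω) ∂μ)
        - (∫ ω, A₁ ω * Y₁ ω ∂μ) * (∫ ω, A₂ ω * Y₂ ω ∂μ)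
      = (∫ ω, A₁ ω * A₂ ω ∂μ) * (∫ ω, Y₁ ω * Y₂ ω ∂μ)
        - ((∫ ω, A₁ ω ∂μ) * (∫ ω, Y₁ ω ∂μ)) * ((∫ ω, A₂ ω ∂μ) * (∫ ω, Y₂ ω ∂μ)) := by
  have h_pairs : IndepFun (fun ω => A₁ ω * A₂ ω) (fun ω => Y₁ ω * Y₂ ω) μ :=
    hindep.comp (measurable_fst.mul measurable_snd) (measurable_fst.mul measurable_snd)
  have h₁ : IndepFun A₁ Y₁ μ := hindep.comp measurable_fst measurable_fst
  have h₂ : IndepFun A₂ Y₂ μ := hindep.comp measurable_snd measurable_snd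
  simp_rw [mul_mul_mul_comm _ (Y₁ _)]
  rw [h_pairs.integral_fun_mul_eq_mul_integral (hA₁.mul hA₂) (hY₁.mul hY₂),
    h₁.integral_fun_mul_eq_mul_integral hA₁ hY₁, h₂.integral_fun_mul_eq_mul_integral hA₂ hY₂]

end

theorem sampled_covariance_decomposition_general
    {Ω : Type*} [MeasurableSpace Ω] (μ : Measure Ω)
    (A₁ A₂ Y₁ Y₂ : Ω → ℝ)
    (hA₁ : MemLp A₁ 2 μ) (hA₂ : MemLp A₂ 2 μ)
    (hY₁ : MemLp Y₁ 2 μ) (hY₂ : MemLp Y₂ 2 μ)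
    (hindep : IndepFun (fun ω => (A₁ ω, A₂ ω)) (fun ω => (Y₁ ω, Y₂ ω)) μ)
    (μA μY cA cY : ℝ)
    (hmA₁ : ∫ ω, A₁ ω ∂μ = μA) (hmA₂ : ∫ ω, A₂ ω ∂μ = μA)
    (hmY₁ : ∫ ω, Y₁ ω ∂μ = μY) (hmY₂ : ∫ ω, Y₂ ω ∂μ = μY)
    (hcA : (∫ ω, A₁ ω * A₂ ω ∂μ) - (∫ ω, A₁ ω ∂μ) * (∫ ω, A₂ ω ∂μ) = cA)
    (hcY : (∫ ω, Y₁ ω * Y₂ ω ∂μ) - (∫ ω, Y₁ ω ∂μ) * (∫ ω, Y₂ ω ∂μ) = cY) :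
    (∫ ω, (A₁ ω * Y₁ ω) * (A₂ ω * Y₂ ω) ∂μ)
      - (∫ ω, A₁ ω * Y₁ ω ∂μ) * (∫ ω, A₂ ω * Y₂ ω ∂μ)
      = (cA + μA ^ 2) * cY + cA * μY ^ 2 := by
  rw [hindep.integral_mul_mul_sub_integral_mul_mul hA₁.aestronglyMeasurable
    hA₂.aestronglyMeasurable hY₁.aestronglyMeasurable hY₂.aestronglyMeasurable]
  subst hcA hcY hmA₁ hmY₁
  rw [hmA₂, hmY₂]
  ring

/-- Lemma 1 of the paper: for square-integrable `A₁, A₂, Y₁, Y₂` with the pair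
`(A₁, A₂)` independent of the pair `(Y₁, Y₂)`, equal means `μ_A` for the `A`'s and
`μ_Y` for the `Y`'s, and covariances `c_A = Cov(A₁, A₂)`, `c_Y = Cov(Y₁, Y₂)`, the
covariance of the products satisfies
`Cov(A₁Y₁, A₂Y₂) = (c_A + μ_A²)c_Y + c_A μ_Y²`. -/
theorem sampled_covariance_decomposition
    {Ω : Type*} [MeasurableSpace Ω] (μ : Measure Ω) [IsProbabilityMeasure μ]
    (A₁ A₂ Y₁ Y₂ : Ω → ℝ)
    (hA₁ : MemLp A₁ 2 μ) (hA₂ : MemLp A₂ 2 μ)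
    (hY₁ : MemLp Y₁ 2 μ) (hY₂ : MemLp Y₂ 2 μ)
    (hindep : IndepFun (fun ω => (A₁ ω, A₂ ω)) (fun ω => (Y₁ ω, Y₂ ω)) μ)
    (μA μY cA cY : ℝ)
    (hmA₁ : ∫ ω, A₁ ω ∂μ = μA) (hmA₂ : ∫ ω, A₂ ω ∂μ = μA)
    (hmY₁ : ∫ ω, Y₁ ω ∂μ = μY) (hmY₂ : ∫ ω, Y₂ ω ∂μ = μY)
    (hcA : (∫ ω, A₁ ω * A₂ ω ∂μ) - (∫ ω, A₁ ω ∂μ) * (∫ ω, A₂ ω ∂μ) = cA)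
    (hcY : (∫ ω, Y₁ ω * Y₂ ω ∂μ) - (∫ ω, Y₁ ω ∂μ) * (∫ ω, Y₂ ω ∂μ) = cY) :
    (∫ ω, (A₁ ω * Y₁ ω) * (A₂ ω * Y₂ ω) ∂μ)
      - (∫ ω, A₁ ω * Y₁ ω ∂μ) * (∫ ω, A₂ ω * Y₂ ω ∂μ)
      = (cA + μA ^ 2) * cY + cA * μY ^ 2 :=
  sampled_covariance_decomposition_general μ A₁ A₂ Y₁ Y₂ hA₁ hA₂ hY₁ hY₂ hindep μA μY cA cY hmA₁
    hmA₂ hmY₁ hmY₂ hcA hcY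
end

section
/- For all reals β > 0 and τ > 0, the series Σ_{n=1}^{∞} β^{4n} τ^{4n−1} e^{−βτ} / (4n−1)! converges and equals (β/4)·(1 − e^{−2βτ} − 2·sin(βτ)·e^{−βτ}). (This is the renewal density computation for Gamma sampling with shape α = 4, using the series identity Σ_{n≥1} x^{4n}/(4n−1)! = x·(sinh x − sin x)/2; it yields E[A(t)A(t+τ)] = μ_A²(1 − e^{−2βτ} − 2 sin(βτ) e^{−βτ}) with μ_A = β/4.) -/
/-!
Multiplying out, the series is `β e^{-βτ} ∑ₘ x^(4m+3)/(4m+3)!` with `x = βτ`. Subtracting the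
power series of `sin x` from that of `sinh x` cancels the terms `x^(2n+1)/(2n+1)!` with `n` even
and doubles those with `n` odd, so the inner sum is `(sinh x - sin x)/2`; expanding `sinh` in
exponentials gives the closed form.
-/

open Real
open scoped Nat

theorem Real.hasSum_pow_four_mul_add_three_div_factorial (x : ℝ) :
    HasSum (fun m : ℕ => x ^ (4 * m + 3) / (4 * m + 3)!) ((sinh x - sin x) / 2) := by
  set a : ℕ → ℝ := fun n => x ^ (2 * n + 1) / (2 * n + 1)!
  have hsub : HasSum (fun n => (a n - (-1) ^ n * a n) / 2) ((sinh x - sin x) / 2) := by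
    simpa only [a, mul_div_assoc] using ((hasSum_sinh x).sub (hasSum_sin x)).div_const 2
  have hodd : Function.Injective fun m : ℕ => 2 * m + 1 := fun m k h => by simpa using h
  have heven : ∀ n ∉ Set.range fun m : ℕ => 2 * m + 1, (a n - (-1) ^ n * a n) / 2 = 0 := by
    intro n hn
    rcases Nat.even_or_odd' n with ⟨m, rfl | rfl⟩
    · simp [pow_mul]
    · exact absurd ⟨m, rfl⟩ hn
  convert (hodd.hasSum_iff heven).2 hsub using 1
  funext m
  simp only [a, Function.comp_apply, pow_succ, pow_mul,
    show 2 * (2 * m + 1) + 1 = 4 * m + 3 by ring]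
  ring

theorem gamma4_renewal_density_general (β τ : ℝ) :
    HasSum
      (fun n : ℕ =>
        β ^ (4 * (n + 1)) * τ ^ (4 * (n + 1) - 1) * Real.exp (-β * τ)
          / (Nat.factorial (4 * (n + 1) - 1)))
      ((β / 4) * (1 - Real.exp (-2 * β * τ)
          - 2 * Real.sin (β * τ) * Real.exp (-β * τ))) := by
  have hscaled : HasSum (fun m : ℕ => β * exp (-β * τ) * ((β * τ) ^ (4 * m + 3) / (4 * m + 3)!))
      (β * exp (-β * τ) * ((sinh (β * τ) - sin (β * τ)) / 2)) :=
    (hasSum_pow_four_mul_add_three_div_factorial (β * τ)).mul_left _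
  convert hscaled using 1
  · funext n
    rw [show 4 * (n + 1) - 1 = 4 * n + 3 by omega, show 4 * (n + 1) = 4 * n + 3 + 1 by ring]
    ring
  · have hexp : exp (-2 * β * τ) = exp (-β * τ) ^ 2 := by rw [← exp_nat_mul]; ring_nf
    rw [sinh_eq, hexp, neg_mul, exp_neg]
    field_simp
    ring

/-- Renewal density for Gamma sampling with shape `α = 4`: for `β, τ > 0`,
`∑_{n=1}^∞ β^{4n} τ^{4n−1} e^{−βτ} / (4n−1)! = (β/4)(1 − e^{−2βτ} − 2 sin(βτ) e^{−βτ})`. -/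
theorem gamma4_renewal_density (β τ : ℝ) (hβ : 0 < β) (hτ : 0 < τ) :
    HasSum
      (fun n : ℕ =>
        β ^ (4 * (n + 1)) * τ ^ (4 * (n + 1) - 1) * Real.exp (-β * τ)
          / (Nat.factorial (4 * (n + 1) - 1)))
      ((β / 4) * (1 - Real.exp (-2 * β * τ)
          - 2 * Real.sin (β * τ) * Real.exp (-β * τ))) :=
  gamma4_renewal_density_general β τ
end

section
/- Let b > 0 and let f : ℝ → ℝ be the uniform density f(x) = 1/b for 0 ≤ x ≤ b and f(x) = 0 otherwise. Denote by f^{(*n)} the n-fold convolution of f with itself (f^{(*1)} = f). Then for every τ with 0 ≤ τ ≤ b, f^{(*n)}(τ) = τ^{n−1}/((n−1)!·bⁿ) for every n ≥ 1, and consequently Σ_{n=1}^{∞} f^{(*n)}(τ) = (1/b)·e^{τ/b}. (This is the renewal density computation for uniform sampling, giving the autocorrelation density E[A(t)A(t+τ)] = (1/2)·μ_A²·e^{τ/b} for 0 ≤ τ ≤ b, with μ_A = 2/b.) -/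
/-!
For a density `f` vanishing on `(-∞, 0)`, the convolution integral defining `f^{(*n+1)}(t)`,
`t ≥ 0`, only sees `s ∈ [0, t]`. If moreover `f = c` on `[0, b]`, induction on `n` gives
`f^{(*n+1)}(t) = c^{n+1} tⁿ / n!` on `[0, b]`, since `∫₀ᵗ (t - s)ⁿ ds = tⁿ⁺¹ / (n + 1)`.
With `c = 1 / b` the series over `n` is `(1 / b) · ∑ (τ / b)ⁿ / n! = (1 / b) e^{τ / b}`.
-/

open MeasureTheory Set Nat

/-- The `n`-fold self-convolution of a density `f : ℝ → ℝ`: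
`iterSelfConv f 1 = f` and `iterSelfConv f (n+1) t = ∫ s, f s · iterSelfConv f n (t − s) ds`.
For `n = 0` we set it to `0` by convention (it is only used for `n ≥ 1`). -/
noncomputable def iterSelfConv (f : ℝ → ℝ) : ℕ → ℝ → ℝ
  | 0 => fun _ => 0
  | 1 => f
  | (n + 2) => fun t => ∫ s : ℝ, f s * iterSelfConv f (n + 1) (t - s)

theorem iterSelfConv_succ_succ (f : ℝ → ℝ) (n : ℕ) (t : ℝ) :
    iterSelfConv f (n + 2) t = ∫ s, f s * iterSelfConv f (n + 1) (t - s) := rfl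

theorem iterSelfConv_eq_zero_of_neg {f : ℝ → ℝ} (hf : ∀ x < 0, f x = 0) :
    ∀ (n : ℕ) {t : ℝ}, t < 0 → iterSelfConv f (n + 1) t = 0
  | 0, t, ht => hf t ht
  | n + 1, t, ht => by
    have hzero : (fun s => f s * iterSelfConv f (n + 1) (t - s)) = 0 := by
      funext s
      rcases lt_or_ge s 0 with hs | hs
      · simp [hf s hs]
      · simp [iterSelfConv_eq_zero_of_neg hf n (by linarith : t - s < 0)]
    rw [iterSelfConv_succ_succ, hzero, Pi.zero_def, integral_zero]

theorem iterSelfConv_succ_succ_eq_intervalIntegral {f : ℝ → ℝ} (hf : ∀ x < 0, f x = 0)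
    (n : ℕ) {t : ℝ} (ht : 0 ≤ t) :
    iterSelfConv f (n + 2) t = ∫ s in 0..t, f s * iterSelfConv f (n + 1) (t - s) := by
  rw [intervalIntegral.integral_of_le ht, ← integral_Icc_eq_integral_Ioc,
    setIntegral_eq_integral_of_forall_compl_eq_zero, iterSelfConv_succ_succ]
  intro s hs
  rcases lt_or_ge s 0 with hs0 | hs0
  · simp [hf s hs0]
  · have hts : t - s < 0 := by linarith [not_le.mp fun hst => hs ⟨hs0, hst⟩]
    simp [iterSelfConv_eq_zero_of_neg hf n hts]

theorem iterSelfConv_eq_of_eqOn_Icc {f : ℝ → ℝ} {b c : ℝ} (hf0 : ∀ x < 0, f x = 0)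
    (hfc : EqOn f (fun _ => c) (Icc 0 b)) (n : ℕ) {t : ℝ} (ht : t ∈ Icc 0 b) :
    iterSelfConv f (n + 1) t = c ^ (n + 1) * t ^ n / n ! := by
  induction n generalizing t with
  | zero => simp [iterSelfConv, hfc ht]
  | succ n ih =>
    have hintegrand : EqOn (fun s => f s * iterSelfConv f (n + 1) (t - s))
        (fun s => c ^ (n + 2) / n ! * (t - s) ^ n) (uIcc 0 t) := by
      intro s hs
      dsimp only
      rw [uIcc_of_le ht.1] at hs
      rw [hfc ⟨hs.1, hs.2.trans ht.2⟩, ih ⟨by linarith [hs.2], by linarith [hs.1, ht.2]⟩]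
      ring
    rw [iterSelfConv_succ_succ_eq_intervalIntegral hf0 n ht.1,
      intervalIntegral.integral_congr hintegrand, intervalIntegral.integral_const_mul,
      intervalIntegral.integral_comp_sub_left (fun x => x ^ n), integral_pow]
    push_cast [factorial_succ]
    field_simp
    ring

theorem uniform_renewal_density_general (b : ℝ)
    (f : ℝ → ℝ) (hf : ∀ x, f x = if 0 ≤ x ∧ x ≤ b then 1 / b else 0)
    (τ : ℝ) (hτ0 : 0 ≤ τ) (hτb : τ ≤ b) :
    (∀ n : ℕ, 1 ≤ n →
      iterSelfConv f n τ = τ ^ (n - 1) / ((Nat.factorial (n - 1)) * b ^ n)) ∧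
    HasSum (fun n : ℕ => iterSelfConv f (n + 1) τ) ((1 / b) * Real.exp (τ / b)) := by
  have hf0 : ∀ x < 0, f x = 0 := fun x hx => by simp [hf, hx.not_ge]
  have hfc : EqOn f (fun _ => 1 / b) (Icc 0 b) := fun x hx => by simp [hf, hx.1, hx.2]
  have hconv (n : ℕ) : iterSelfConv f (n + 1) τ = 1 / b * ((τ / b) ^ n / n !) := by
    rw [iterSelfConv_eq_of_eqOn_Icc hf0 hfc n ⟨hτ0, hτb⟩]
    ring
  refine ⟨fun n hn => ?_, ?_⟩
  · obtain ⟨m, rfl⟩ := Nat.exists_eq_add_of_le' hn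
    rw [hconv, Nat.add_sub_cancel]
    ring
  · simp_rw [hconv, Real.exp_eq_exp_ℝ]
    exact (NormedSpace.expSeries_div_hasSum_exp (τ / b)).mul_left (1 / b)

/-- Renewal density for uniform sampling: let `f` be the uniform density on `[0, b]`.
Then for `0 ≤ τ ≤ b` the `n`-fold self-convolution satisfies
`f^{(*n)}(τ) = τ^{n−1} / ((n−1)! bⁿ)` for all `n ≥ 1`, and consequently
`∑_{n=1}^∞ f^{(*n)}(τ) = (1/b) e^{τ/b}`. -/
theorem uniform_renewal_density (b : ℝ) (hb : 0 < b)
    (f : ℝ → ℝ) (hf : ∀ x, f x = if 0 ≤ x ∧ x ≤ b then 1 / b else 0)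
    (τ : ℝ) (hτ0 : 0 ≤ τ) (hτb : τ ≤ b) :
    (∀ n : ℕ, 1 ≤ n →
      iterSelfConv f n τ = τ ^ (n - 1) / ((Nat.factorial (n - 1)) * b ^ n)) ∧
    HasSum (fun n : ℕ => iterSelfConv f (n + 1) τ) ((1 / b) * Real.exp (τ / b)) :=
  uniform_renewal_density_general b f hf τ hτ0 hτb
end

section
/- Let M ≥ 1 be an integer. Let A₁, ..., A_M and Y₁, ..., Y_M be square-integrable real random variables such that the vector (A₁, ..., A_M) is independent of (Y₁, ..., Y_M), and each sequence is covariance stationary: E[A_t] = μ_A, E[Y_t] = μ_Y for all t, Cov(A_s, A_t) = c_A(|t−s|), Cov(Y_s, Y_t) = c_Y(|t−s|), with σ_A² = c_A(0) and σ_Y² = c_Y(0). Set W_t = A_t·Y_t and let A^{(M)}, Y^{(M)}, W^{(M)} denote the block averages (1/M)·Σ_{t=1}^{M} of the respective sequences. Then Var(W^{(M)}) = μ_Y²·Var(A^{(M)}) + μ_A²·Var(Y^{(M)}) + (1/M)·σ_Y²·σ_A² + (2/M²)·Σ_{τ=1}^{M−1} (M−τ)·c_Y(τ)·c_A(τ).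 (This is Lemma 2 of the paper.) -/
open MeasureTheory ProbabilityTheory Finset

/-!
Writing `W^{(M)} = M⁻¹ ∑ₜ Aₜ Yₜ`, the variance is `M⁻² ∑ₛ ∑ₜ Cov(Aₛ Yₛ, Aₜ Yₜ)`. Independence of
the two vectors factorises `E[Aₛ Yₛ Aₜ Yₜ] = E[Aₛ Aₜ] E[Yₛ Yₜ]`, so that
`Cov(Aₛ Yₛ, Aₜ Yₜ) = c_A c_Y + μ_Y² c_A + μ_A² c_Y`, all evaluated at `|t - s|`. The last two terms
sum to `μ_Y² Var(A^{(M)}) + μ_A² Var(Y^{(M)})`, and in the first one the lag `τ ≥ 1` occurs for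
`2 (M - τ)` of the pairs `(s, t)` and the lag `0` for `M` of them.
-/

section LagSums

variable {R : Type*} [CommRing R]

lemma sum_Icc_dist_add_one (f : ℕ → R) (m : ℕ) :
    ∑ t ∈ Icc 1 m, f (Nat.dist t (m + 1)) = ∑ τ ∈ Icc 1 m, f τ := by
  refine sum_nbij' (fun t ↦ m + 1 - t) (fun τ ↦ m + 1 - τ) ?_ ?_ ?_ ?_ ?_ <;>
    intro t ht <;> simp only [mem_Icc] at ht ⊢
  all_goals first | omega | (congr 1; simp only [Nat.dist]; omega)

lemma sum_Icc_sum_Icc_dist_succ (f : ℕ → R) (m : ℕ) :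
    ∑ s ∈ Icc 1 (m + 1), ∑ t ∈ Icc 1 (m + 1), f (Nat.dist s t)
      = ∑ s ∈ Icc 1 m, ∑ t ∈ Icc 1 m, f (Nat.dist s t) + 2 * ∑ τ ∈ Icc 1 m, f τ + f 0 := by
  simp only [sum_Icc_succ_top (Nat.le_add_left 1 m), sum_add_distrib, Nat.dist_self]
  rw [← sum_Icc_dist_add_one f m]
  simp only [Nat.dist_comm (m + 1)]
  ring

lemma sum_Icc_sum_Icc_dist (f : ℕ → R) (M : ℕ) :
    ∑ s ∈ Icc 1 M, ∑ t ∈ Icc 1 M, f (Nat.dist s t)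
      = M * f 0 + 2 * ∑ τ ∈ Icc 1 (M - 1), ((M : R) - τ) * f τ := by
  obtain _ | m := M
  · simp
  rw [Nat.add_sub_cancel]
  induction m with
  | zero => simp
  | succ m ih =>
    have hweight : ∑ τ ∈ Icc 1 m, ((↑(m + 1 + 1) : R) - τ) * f τ
        = ∑ τ ∈ Icc 1 m, ((↑(m + 1) : R) - τ) * f τ + ∑ τ ∈ Icc 1 m, f τ := by
      rw [← sum_add_distrib]
      refine sum_congr rfl fun τ _ ↦ ?_
      push_cast
      ring
    rw [sum_Icc_sum_Icc_dist_succ, ih, sum_Icc_succ_top (Nat.le_add_left 1 m) f,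
      sum_Icc_succ_top (Nat.le_add_left 1 m) (fun τ ↦ ((↑(m + 1 + 1) : R) - τ) * f τ), hweight]
    push_cast
    ring

end LagSums

namespace ProbabilityTheory

variable {Ω : Type*} [MeasurableSpace Ω] {μ : Measure Ω}

lemma IndepFun.memLp_two_mul {X Y : Ω → ℝ} (hXY : IndepFun X Y μ)
    (hX : MemLp X 2 μ) (hY : MemLp Y 2 μ) : MemLp (X * Y) 2 μ := by
  rw [memLp_two_iff_integrable_sq (hX.aestronglyMeasurable.mul hY.aestronglyMeasurable)]
  convert (hXY.comp (measurable_id.pow_const 2) (measurable_id.pow_const 2)).integrable_mul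
    hX.integrable_sq hY.integrable_sq using 1
  ext ω
  simp [mul_pow]

lemma IndepFun.eval_prodMk {ι : Type*} {X Y : ι → Ω → ℝ}
    (h : IndepFun (fun ω i ↦ X i ω) (fun ω i ↦ Y i ω) μ) (i j : ι) :
    IndepFun (fun ω ↦ (X i ω, X j ω)) (fun ω ↦ (Y i ω, Y j ω)) μ :=
  h.comp ((measurable_pi_apply i).prodMk (measurable_pi_apply j))
    ((measurable_pi_apply i).prodMk (measurable_pi_apply j))

lemma IndepFun.eval_prodMk_of_mem_Icc {M : ℕ} {X Y : ℕ → Ω → ℝ}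
    (h : IndepFun (fun ω (i : Fin M) ↦ X (i.val + 1) ω) (fun ω (i : Fin M) ↦ Y (i.val + 1) ω) μ)
    {s t : ℕ} (hs : s ∈ Icc 1 M) (ht : t ∈ Icc 1 M) :
    IndepFun (fun ω ↦ (X s ω, X t ω)) (fun ω ↦ (Y s ω, Y t ω)) μ := by
  have hfin : ∀ s ∈ Icc 1 M, ∃ i : Fin M, i.val + 1 = s := fun s hs ↦
    ⟨⟨s - 1, by grind⟩, by grind⟩
  obtain ⟨i, rfl⟩ := hfin s hs
  obtain ⟨j, rfl⟩ := hfin t ht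
  exact h.eval_prodMk (X := fun i ω ↦ X (i.val + 1) ω) i j

lemma variance_const_mul_sum [IsFiniteMeasure μ] {ι : Type*} {X : ι → Ω → ℝ} {s : Finset ι}
    (hX : ∀ i ∈ s, MemLp (X i) 2 μ) (c : ℝ) :
    Var[fun ω ↦ c * ∑ i ∈ s, X i ω; μ] = c ^ 2 * ∑ i ∈ s, ∑ j ∈ s, cov[X i, X j; μ] := by
  rw [variance_const_mul,
    ← covariance_self (memLp_finsetSum s hX).aestronglyMeasurable.aemeasurable,
    covariance_fun_sum_fun_sum' hX hX]

variable [IsProbabilityMeasure μ]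

lemma covariance_mul_mul_of_indepFun {X₁ X₂ Y₁ Y₂ : Ω → ℝ}
    (hXY : IndepFun (fun ω ↦ (X₁ ω, X₂ ω)) (fun ω ↦ (Y₁ ω, Y₂ ω)) μ)
    (hX₁ : MemLp X₁ 2 μ) (hX₂ : MemLp X₂ 2 μ) (hY₁ : MemLp Y₁ 2 μ) (hY₂ : MemLp Y₂ 2 μ) :
    cov[X₁ * Y₁, X₂ * Y₂; μ] = cov[X₁, X₂; μ] * cov[Y₁, Y₂; μ]
      + μ[Y₁] * μ[Y₂] * cov[X₁, X₂; μ] + μ[X₁] * μ[X₂] * cov[Y₁, Y₂; μ] := by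
  have h₁ : IndepFun X₁ Y₁ μ := hXY.comp measurable_fst measurable_fst
  have h₂ : IndepFun X₂ Y₂ μ := hXY.comp measurable_snd measurable_snd
  have h₁₂ : IndepFun (X₁ * X₂) (Y₁ * Y₂) μ := hXY.comp measurable_mul measurable_mul
  have hW : μ[X₁ * Y₁ * (X₂ * Y₂)] = μ[X₁ * X₂] * μ[Y₁ * Y₂] := by
    rw [show X₁ * Y₁ * (X₂ * Y₂) = X₁ * X₂ * (Y₁ * Y₂) by ring]
    exact h₁₂.integral_mul_eq_mul_integral
      (hX₁.aestronglyMeasurable.mul hX₂.aestronglyMeasurable)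
      (hY₁.aestronglyMeasurable.mul hY₂.aestronglyMeasurable)
  rw [covariance_eq_sub (h₁.memLp_two_mul hX₁ hY₁) (h₂.memLp_two_mul hX₂ hY₂),
    covariance_eq_sub hX₁ hX₂, covariance_eq_sub hY₁ hY₂, hW,
    h₁.integral_mul_eq_mul_integral hX₁.aestronglyMeasurable hY₁.aestronglyMeasurable,
    h₂.integral_mul_eq_mul_integral hX₂.aestronglyMeasurable hY₂.aestronglyMeasurable]
  ring

end ProbabilityTheory

theorem aggregate_variance_of_sampled_process_general
    {Ω : Type*} [MeasurableSpace Ω] (μ : Measure Ω) [IsProbabilityMeasure μ]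
    (M : ℕ)
    (A Y : ℕ → Ω → ℝ)
    (hA : ∀ t ∈ Finset.Icc 1 M, MemLp (A t) 2 μ)
    (hY : ∀ t ∈ Finset.Icc 1 M, MemLp (Y t) 2 μ)
    (hindep : IndepFun (fun ω (i : Fin M) => A (i.val + 1) ω)
      (fun ω (i : Fin M) => Y (i.val + 1) ω) μ)
    (μA μY : ℝ) (cA cY : ℕ → ℝ)
    (hmA : ∀ t ∈ Finset.Icc 1 M, ∫ ω, A t ω ∂μ = μA)
    (hmY : ∀ t ∈ Finset.Icc 1 M, ∫ ω, Y t ω ∂μ = μY)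
    (hstatA : ∀ s ∈ Finset.Icc 1 M, ∀ t ∈ Finset.Icc 1 M,
      (∫ ω, A s ω * A t ω ∂μ) - (∫ ω, A s ω ∂μ) * (∫ ω, A t ω ∂μ)
        = cA (Nat.dist s t))
    (hstatY : ∀ s ∈ Finset.Icc 1 M, ∀ t ∈ Finset.Icc 1 M,
      (∫ ω, Y s ω * Y t ω ∂μ) - (∫ ω, Y s ω ∂μ) * (∫ ω, Y t ω ∂μ)
        = cY (Nat.dist s t)) :
    variance (fun ω => (M : ℝ)⁻¹ * ∑ t ∈ Finset.Icc 1 M, A t ω * Y t ω) μ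
      = μY ^ 2 * variance (fun ω => (M : ℝ)⁻¹ * ∑ t ∈ Finset.Icc 1 M, A t ω) μ
        + μA ^ 2 * variance (fun ω => (M : ℝ)⁻¹ * ∑ t ∈ Finset.Icc 1 M, Y t ω) μ
        + (1 / (M : ℝ)) * cY 0 * cA 0
        + (2 / (M : ℝ) ^ 2) * ∑ τ ∈ Finset.Icc 1 (M - 1), ((M : ℝ) - τ) * (cY τ * cA τ) := by
  have hpair : ∀ s ∈ Icc 1 M, ∀ t ∈ Icc 1 M,
      IndepFun (fun ω ↦ (A s ω, A t ω)) (fun ω ↦ (Y s ω, Y t ω)) μ :=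
    fun s hs t ht ↦ hindep.eval_prodMk_of_mem_Icc hs ht
  have hW : ∀ t ∈ Icc 1 M, MemLp (A t * Y t) 2 μ := fun t ht ↦
    ((hpair t ht t ht).comp measurable_fst measurable_fst).memLp_two_mul (hA t ht) (hY t ht)
  have hcovA : ∀ s ∈ Icc 1 M, ∀ t ∈ Icc 1 M, cov[A s, A t; μ] = cA (Nat.dist s t) :=
    fun s hs t ht ↦ (covariance_eq_sub (hA s hs) (hA t ht)).trans (hstatA s hs t ht)
  have hcovY : ∀ s ∈ Icc 1 M, ∀ t ∈ Icc 1 M, cov[Y s, Y t; μ] = cY (Nat.dist s t) :=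
    fun s hs t ht ↦ (covariance_eq_sub (hY s hs) (hY t ht)).trans (hstatY s hs t ht)
  have hcovW : ∀ s ∈ Icc 1 M, ∀ t ∈ Icc 1 M,
      cov[fun ω ↦ A s ω * Y s ω, fun ω ↦ A t ω * Y t ω; μ]
        = cY (Nat.dist s t) * cA (Nat.dist s t) + μY ^ 2 * cA (Nat.dist s t)
          + μA ^ 2 * cY (Nat.dist s t) := fun s hs t ht ↦ by
    change cov[A s * Y s, A t * Y t; μ] = _
    rw [covariance_mul_mul_of_indepFun (hpair s hs t ht) (hA s hs) (hA t ht) (hY s hs) (hY t ht),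
      hcovA s hs t ht, hcovY s hs t ht, hmA s hs, hmA t ht, hmY s hs, hmY t ht]
    ring
  rw [variance_const_mul_sum (X := fun t ω ↦ A t ω * Y t ω) hW, variance_const_mul_sum hA,
    variance_const_mul_sum hY,
    sum_congr rfl fun s hs ↦ sum_congr rfl fun t ht ↦ hcovW s hs t ht,
    sum_congr rfl fun s hs ↦ sum_congr rfl fun t ht ↦ hcovA s hs t ht,
    sum_congr rfl fun s hs ↦ sum_congr rfl fun t ht ↦ hcovY s hs t ht]
  simp only [sum_add_distrib, ← mul_sum]
  rw [sum_Icc_sum_Icc_dist (fun τ ↦ cY τ * cA τ)]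
  have hscale : ((M : ℝ)⁻¹) ^ 2 * M = 1 / M := by
    rw [inv_pow, ← div_eq_inv_mul, sq, div_self_mul_self', one_div]
  linear_combination (cY 0 * cA 0) * hscale

/-- Lemma 2 of the paper: for independent covariance-stationary sequences
`A₁, …, A_M` (means `μ_A`, autocovariance `c_A`, variance `σ_A² = c_A 0`) and
`Y₁, …, Y_M` (means `μ_Y`, autocovariance `c_Y`, variance `σ_Y² = c_Y 0`), with
`W_t = A_t Y_t`, the block averages satisfy
`Var(W^{(M)}) = μ_Y² Var(A^{(M)}) + μ_A² Var(Y^{(M)}) + σ_Y²σ_A²/M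
  + (2/M²) ∑_{τ=1}^{M−1} (M−τ) c_Y(τ) c_A(τ)`. -/
theorem aggregate_variance_of_sampled_process
    {Ω : Type*} [MeasurableSpace Ω] (μ : Measure Ω) [IsProbabilityMeasure μ]
    (M : ℕ) (hM : 1 ≤ M)
    (A Y : ℕ → Ω → ℝ)
    (hA : ∀ t ∈ Finset.Icc 1 M, MemLp (A t) 2 μ)
    (hY : ∀ t ∈ Finset.Icc 1 M, MemLp (Y t) 2 μ)
    (hindep : IndepFun (fun ω (i : Fin M) => A (i.val + 1) ω)
      (fun ω (i : Fin M) => Y (i.val + 1) ω) μ)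
    (μA μY : ℝ) (cA cY : ℕ → ℝ)
    (hmA : ∀ t ∈ Finset.Icc 1 M, ∫ ω, A t ω ∂μ = μA)
    (hmY : ∀ t ∈ Finset.Icc 1 M, ∫ ω, Y t ω ∂μ = μY)
    (hstatA : ∀ s ∈ Finset.Icc 1 M, ∀ t ∈ Finset.Icc 1 M,
      (∫ ω, A s ω * A t ω ∂μ) - (∫ ω, A s ω ∂μ) * (∫ ω, A t ω ∂μ)
        = cA (Nat.dist s t))
    (hstatY : ∀ s ∈ Finset.Icc 1 M, ∀ t ∈ Finset.Icc 1 M,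
      (∫ ω, Y s ω * Y t ω ∂μ) - (∫ ω, Y s ω ∂μ) * (∫ ω, Y t ω ∂μ)
        = cY (Nat.dist s t)) :
    variance (fun ω => (M : ℝ)⁻¹ * ∑ t ∈ Finset.Icc 1 M, A t ω * Y t ω) μ
      = μY ^ 2 * variance (fun ω => (M : ℝ)⁻¹ * ∑ t ∈ Finset.Icc 1 M, A t ω) μ
        + μA ^ 2 * variance (fun ω => (M : ℝ)⁻¹ * ∑ t ∈ Finset.Icc 1 M, Y t ω) μ
        + (1 / (M : ℝ)) * cY 0 * cA 0
        + (2 / (M : ℝ) ^ 2) * ∑ τ ∈ Finset.Icc 1 (M - 1), ((M : ℝ) - τ) * (cY τ * cA τ) :=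
  aggregate_variance_of_sampled_process_general μ M A Y hA hY hindep μA μY cA cY hmA hmY hstatA
    hstatY
end

section
/- Under the hypotheses of the paper's Lemma 2 (M ≥ 1; (A₁,...,A_M) independent of (Y₁,...,Y_M); both covariance stationary with means μ_A, μ_Y, variances σ_A², σ_Y², autocovariances c_A, c_Y; W_t = A_t Y_t), assume additionally that μ_A ≠ 0 and that c_A(τ) = 0 for all 1 ≤ τ ≤ M−1 (as holds for Bernoulli sampling with geometric inter-sample times). Then the aggregate variance of the traffic process can be recovered from the observations as Var(Y^{(M)}) = (1/μ_A²)·Var(W^{(M)}) − (1/μ_A²)·(μ_Y²·Var(A^{(M)}) + (1/M)·σ_Y²·σ_A²). -/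
/-!
Writing each block-average variance as a double sum of covariances, independence of `A` and `Y`
gives `Cov(A_s Y_s, A_t Y_t) = c_A c_Y + μ_A² c_Y + μ_Y² c_A`, hence
`Var(W^{(M)}) = μ_A² Var(Y^{(M)}) + μ_Y² Var(A^{(M)}) + M⁻² ∑_{s,t} c_A(|s-t|) c_Y(|s-t|)`.
When `c_A` vanishes at all nonzero lags only the `M` diagonal terms `σ_A² σ_Y²` survive, and
solving for `Var(Y^{(M)})` gives the reconstruction formula.
-/

open MeasureTheory ProbabilityTheory Finset

lemma Finset.sum_sum_eq_sum_diag_of_offDiag_eq_zero {ι R : Type*} [AddCommMonoid R]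
    {s : Finset ι} {f : ι → ι → R} (h : ∀ i ∈ s, ∀ j ∈ s, i ≠ j → f i j = 0) :
    ∑ i ∈ s, ∑ j ∈ s, f i j = ∑ i ∈ s, f i i :=
  sum_congr rfl fun i hi =>
    sum_eq_single_of_mem i hi fun j hj hji => h i hi j hj (Ne.symm hji)

section

variable {Ω : Type*} [MeasurableSpace Ω] {μ : Measure Ω}

lemma indepFun_prod_of_indepFun_pi {M : ℕ} {A Y : ℕ → Ω → ℝ}
    (h : IndepFun (fun ω (i : Fin M) => A (i.val + 1) ω)
      (fun ω (i : Fin M) => Y (i.val + 1) ω) μ)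
    {s t : ℕ} (hs : s ∈ Icc 1 M) (ht : t ∈ Icc 1 M) :
    IndepFun (fun ω => (A s ω, A t ω)) (fun ω => (Y s ω, Y t ω)) μ := by
  obtain ⟨i, rfl⟩ : ∃ i : Fin M, i.val + 1 = s := ⟨⟨s - 1, by grind⟩, by grind⟩
  obtain ⟨j, rfl⟩ : ∃ j : Fin M, j.val + 1 = t := ⟨⟨t - 1, by grind⟩, by grind⟩
  exact h.comp ((measurable_pi_apply i).prodMk (measurable_pi_apply j))
    ((measurable_pi_apply i).prodMk (measurable_pi_apply j))

lemma ProbabilityTheory.IndepFun.memLp_two_mul_s11 {X Y : Ω → ℝ} (h : IndepFun X Y μ)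
    (hX : MemLp X 2 μ) (hY : MemLp Y 2 μ) : MemLp (X * Y) 2 μ := by
  rw [memLp_two_iff_integrable_sq (hX.1.mul hY.1)]
  have hsq : IndepFun (fun ω => X ω ^ 2) (fun ω => Y ω ^ 2) μ :=
    h.comp (measurable_id.pow_const 2) (measurable_id.pow_const 2)
  simpa only [Pi.mul_def, mul_pow] using hsq.integrable_mul hX.integrable_sq hY.integrable_sq

variable [IsProbabilityMeasure μ]

lemma covariance_mul_mul_of_indepFun {X₁ X₂ Y₁ Y₂ : Ω → ℝ}
    (hX₁ : MemLp X₁ 2 μ) (hX₂ : MemLp X₂ 2 μ) (hY₁ : MemLp Y₁ 2 μ) (hY₂ : MemLp Y₂ 2 μ)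
    (h : IndepFun (fun ω => (X₁ ω, X₂ ω)) (fun ω => (Y₁ ω, Y₂ ω)) μ) :
    cov[X₁ * Y₁, X₂ * Y₂; μ] = cov[X₁, X₂; μ] * cov[Y₁, Y₂; μ]
      + μ[X₁] * μ[X₂] * cov[Y₁, Y₂; μ] + μ[Y₁] * μ[Y₂] * cov[X₁, X₂; μ] := by
  have h₁ : IndepFun X₁ Y₁ μ := h.comp measurable_fst measurable_fst
  have h₂ : IndepFun X₂ Y₂ μ := h.comp measurable_snd measurable_snd
  have h₁₂ : IndepFun (X₁ * X₂) (Y₁ * Y₂) μ :=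
    h.comp (measurable_fst.mul measurable_snd) (measurable_fst.mul measurable_snd)
  have hswap : X₁ * Y₁ * (X₂ * Y₂) = X₁ * X₂ * (Y₁ * Y₂) := by ring
  rw [covariance_eq_sub (h₁.memLp_two_mul_s11 hX₁ hY₁) (h₂.memLp_two_mul_s11 hX₂ hY₂),
    covariance_eq_sub hX₁ hX₂, covariance_eq_sub hY₁ hY₂, hswap,
    h₁₂.integral_mul_eq_mul_integral (hX₁.1.mul hX₂.1) (hY₁.1.mul hY₂.1),
    h₁.integral_mul_eq_mul_integral hX₁.1 hY₁.1, h₂.integral_mul_eq_mul_integral hX₂.1 hY₂.1]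
  ring

lemma variance_const_mul_sum {ι : Type*} (c : ℝ) (s : Finset ι) {X : ι → Ω → ℝ}
    (hX : ∀ i ∈ s, MemLp (X i) 2 μ) :
    variance (fun ω => c * ∑ i ∈ s, X i ω) μ = c ^ 2 * ∑ i ∈ s, ∑ j ∈ s, cov[X i, X j; μ] := by
  rw [variance_const_mul, ← covariance_self (memLp_finsetSum s hX).1.aemeasurable,
    covariance_fun_sum_fun_sum' hX hX]

lemma variance_const_mul_sum_mul {ι : Type*} (c : ℝ) (s : Finset ι) {A Y : ι → Ω → ℝ}
    {μA μY : ℝ} (hA : ∀ i ∈ s, MemLp (A i) 2 μ) (hY : ∀ i ∈ s, MemLp (Y i) 2 μ)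
    (hindep : ∀ i ∈ s, ∀ j ∈ s,
      IndepFun (fun ω => (A i ω, A j ω)) (fun ω => (Y i ω, Y j ω)) μ)
    (hmA : ∀ i ∈ s, μ[A i] = μA) (hmY : ∀ i ∈ s, μ[Y i] = μY) :
    variance (fun ω => c * ∑ i ∈ s, A i ω * Y i ω) μ
      = μA ^ 2 * variance (fun ω => c * ∑ i ∈ s, Y i ω) μ
        + μY ^ 2 * variance (fun ω => c * ∑ i ∈ s, A i ω) μ
        + c ^ 2 * ∑ i ∈ s, ∑ j ∈ s, cov[A i, A j; μ] * cov[Y i, Y j; μ] := by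
  have hW : ∀ i ∈ s, MemLp (A i * Y i) 2 μ := fun i hi =>
    ((hindep i hi i hi).comp measurable_fst measurable_fst).memLp_two_mul_s11 (hA i hi) (hY i hi)
  have hcov : ∀ i ∈ s, ∀ j ∈ s, cov[A i * Y i, A j * Y j; μ]
      = cov[A i, A j; μ] * cov[Y i, Y j; μ]
        + μA ^ 2 * cov[Y i, Y j; μ] + μY ^ 2 * cov[A i, A j; μ] := fun i hi j hj => by
    rw [covariance_mul_mul_of_indepFun (hA i hi) (hA j hj) (hY i hi) (hY j hj) (hindep i hi j hj),
      hmA i hi, hmA j hj, hmY i hi, hmY j hj]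
    ring
  have hvarW := variance_const_mul_sum c s hW
  simp only [Pi.mul_apply] at hvarW
  rw [hvarW, variance_const_mul_sum c s hY, variance_const_mul_sum c s hA,
    sum_congr rfl fun i hi => sum_congr rfl fun j hj => hcov i hi j hj]
  simp only [sum_add_distrib, ← mul_sum]
  ring

end

theorem aggregate_variance_reconstruction_general
    {Ω : Type*} [MeasurableSpace Ω] (μ : Measure Ω) [IsProbabilityMeasure μ]
    (M : ℕ)
    (A Y : ℕ → Ω → ℝ)
    (hA : ∀ t ∈ Finset.Icc 1 M, MemLp (A t) 2 μ)
    (hY : ∀ t ∈ Finset.Icc 1 M, MemLp (Y t) 2 μ)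
    (hindep : IndepFun (fun ω (i : Fin M) => A (i.val + 1) ω)
      (fun ω (i : Fin M) => Y (i.val + 1) ω) μ)
    (μA μY : ℝ) (cA cY : ℕ → ℝ)
    (hmA : ∀ t ∈ Finset.Icc 1 M, ∫ ω, A t ω ∂μ = μA)
    (hmY : ∀ t ∈ Finset.Icc 1 M, ∫ ω, Y t ω ∂μ = μY)
    (hstatA : ∀ s ∈ Finset.Icc 1 M, ∀ t ∈ Finset.Icc 1 M,
      (∫ ω, A s ω * A t ω ∂μ) - (∫ ω, A s ω ∂μ) * (∫ ω, A t ω ∂μ)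
        = cA (Nat.dist s t))
    (hstatY : ∀ s ∈ Finset.Icc 1 M, ∀ t ∈ Finset.Icc 1 M,
      (∫ ω, Y s ω * Y t ω ∂μ) - (∫ ω, Y s ω ∂μ) * (∫ ω, Y t ω ∂μ)
        = cY (Nat.dist s t))
    (hμA : μA ≠ 0)
    (hcA0 : ∀ τ : ℕ, 1 ≤ τ → τ ≤ M - 1 → cA τ = 0) :
    variance (fun ω => (M : ℝ)⁻¹ * ∑ t ∈ Finset.Icc 1 M, Y t ω) μ
      = (1 / μA ^ 2)
          * variance (fun ω => (M : ℝ)⁻¹ * ∑ t ∈ Finset.Icc 1 M, A t ω * Y t ω) μ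
        - (1 / μA ^ 2)
          * (μY ^ 2 * variance (fun ω => (M : ℝ)⁻¹ * ∑ t ∈ Finset.Icc 1 M, A t ω) μ
              + (1 / (M : ℝ)) * cY 0 * cA 0) := by
  have hcovA : ∀ s ∈ Icc 1 M, ∀ t ∈ Icc 1 M, cov[A s, A t; μ] = cA (Nat.dist s t) :=
    fun s hs t ht => (covariance_eq_sub (hA s hs) (hA t ht)).trans (hstatA s hs t ht)
  have hcovY : ∀ s ∈ Icc 1 M, ∀ t ∈ Icc 1 M, cov[Y s, Y t; μ] = cY (Nat.dist s t) :=
    fun s hs t ht => (covariance_eq_sub (hY s hs) (hY t ht)).trans (hstatY s hs t ht)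
  have hcross : ∑ s ∈ Icc 1 M, ∑ t ∈ Icc 1 M, cov[A s, A t; μ] * cov[Y s, Y t; μ]
      = M * (cA 0 * cY 0) := by
    rw [sum_sum_eq_sum_diag_of_offDiag_eq_zero fun s hs t ht hst => by
      rw [hcovA s hs t ht, hcA0 _ (by grind [Nat.dist]) (by grind [Nat.dist]), zero_mul]]
    rw [sum_congr rfl fun t ht => by rw [hcovA t ht t ht, hcovY t ht t ht, Nat.dist_self]]
    simp
  have hinv : (M : ℝ)⁻¹ ^ 2 * M = (M : ℝ)⁻¹ := by
    simpa [sq] using mul_self_mul_inv (M : ℝ)⁻¹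
  rw [variance_const_mul_sum_mul _ _ hA hY
    (fun s hs t ht => indepFun_prod_of_indepFun_pi hindep hs ht) hmA hmY, hcross, ← mul_assoc, hinv]
  field_simp
  ring

/-- Aggregate-variance reconstruction under Bernoulli (geometric) sampling:
under the hypotheses of Lemma 2, if additionally `μ_A ≠ 0` and `c_A(τ) = 0` for
`1 ≤ τ ≤ M−1`, then
`Var(Y^{(M)}) = Var(W^{(M)})/μ_A² − (μ_Y² Var(A^{(M)}) + σ_Y²σ_A²/M)/μ_A²`. -/
theorem aggregate_variance_reconstruction
    {Ω : Type*} [MeasurableSpace Ω] (μ : Measure Ω) [IsProbabilityMeasure μ]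
    (M : ℕ) (hM : 1 ≤ M)
    (A Y : ℕ → Ω → ℝ)
    (hA : ∀ t ∈ Finset.Icc 1 M, MemLp (A t) 2 μ)
    (hY : ∀ t ∈ Finset.Icc 1 M, MemLp (Y t) 2 μ)
    (hindep : IndepFun (fun ω (i : Fin M) => A (i.val + 1) ω)
      (fun ω (i : Fin M) => Y (i.val + 1) ω) μ)
    (μA μY : ℝ) (cA cY : ℕ → ℝ)
    (hmA : ∀ t ∈ Finset.Icc 1 M, ∫ ω, A t ω ∂μ = μA)
    (hmY : ∀ t ∈ Finset.Icc 1 M, ∫ ω, Y t ω ∂μ = μY)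
    (hstatA : ∀ s ∈ Finset.Icc 1 M, ∀ t ∈ Finset.Icc 1 M,
      (∫ ω, A s ω * A t ω ∂μ) - (∫ ω, A s ω ∂μ) * (∫ ω, A t ω ∂μ)
        = cA (Nat.dist s t))
    (hstatY : ∀ s ∈ Finset.Icc 1 M, ∀ t ∈ Finset.Icc 1 M,
      (∫ ω, Y s ω * Y t ω ∂μ) - (∫ ω, Y s ω ∂μ) * (∫ ω, Y t ω ∂μ)
        = cY (Nat.dist s t))
    (hμA : μA ≠ 0)
    (hcA0 : ∀ τ : ℕ, 1 ≤ τ → τ ≤ M - 1 → cA τ = 0) :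
    variance (fun ω => (M : ℝ)⁻¹ * ∑ t ∈ Finset.Icc 1 M, Y t ω) μ
      = (1 / μA ^ 2)
          * variance (fun ω => (M : ℝ)⁻¹ * ∑ t ∈ Finset.Icc 1 M, A t ω * Y t ω) μ
        - (1 / μA ^ 2)
          * (μY ^ 2 * variance (fun ω => (M : ℝ)⁻¹ * ∑ t ∈ Finset.Icc 1 M, A t ω) μ
              + (1 / (M : ℝ)) * cY 0 * cA 0) :=
  aggregate_variance_reconstruction_general μ M A Y hA hY hindep μA μY cA cY hmA hmY hstatA hstatY
    hμA hcA0
end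

section
/- Let U₁, U₂, V₁, V₂ be {0,1}-valued random variables such that the pair (U₁, U₂) is independent of the pair (V₁, V₂), with E[U₁] = E[U₂] = μ_U, E[V₁] = E[V₂] = μ_V, Cov(U₁, U₂) = c_U and Cov(V₁, V₂) = c_V. Define W_i = U_i + V_i − U_i·V_i for i = 1, 2 (the logical OR of U_i and V_i). Then Cov(W₁, W₂) = c_U·c_V + c_U·(1 − μ_V)² + c_V·(1 − μ_U)². (This is the paper's two-node formula: the busy-period indicator observed at the egress of a two-node path is the OR of the individual nodes' busy indicators, and its autocovariance satisfies c_{W₂}(τ) = c_{Y₁}(τ)c_{Y₂}(τ) + c_{Y₁}(τ)(1−μ_{Y₂})² + c_{Y₂}(τ)(1−μ_{Y₁})².) -/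
/-!
Complementing turns the OR into a product, `1 - W_i = (1 - U_i)(1 - V_i)`, and complementing
both arguments does not change a covariance. As `(1 - U₁, 1 - U₂)` is independent of
`(1 - V₁, 1 - V₂)`, the second moment of the products factors into
`E[(1-U₁)(1-U₂)] E[(1-V₁)(1-V₂)] = (c_U + (1-μ_U)²)(c_V + (1-μ_V)²)`, and subtracting the
squared mean `(1-μ_U)²(1-μ_V)²` leaves the formula.
-/

open MeasureTheory ProbabilityTheory

section

variable {Ω : Type*} [MeasurableSpace Ω] {μ : Measure Ω}

/-- `E[XY] − E[X]E[Y]`; unlike `ProbabilityTheory.covariance` it can be expanded under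
integrability hypotheses alone, without `L²`. -/
noncomputable def cov (X Y : Ω → ℝ) (μ : Measure Ω) : ℝ :=
  ∫ ω, X ω * Y ω ∂μ - (∫ ω, X ω ∂μ) * ∫ ω, Y ω ∂μ

lemma integral_one_sub [IsProbabilityMeasure μ] {X : Ω → ℝ} (hX : Integrable X μ) :
    ∫ ω, 1 - X ω ∂μ = 1 - ∫ ω, X ω ∂μ := by
  rw [integral_sub (integrable_const 1) hX, integral_const, probReal_univ, one_smul]

lemma cov_one_sub_one_sub [IsProbabilityMeasure μ] {X Y : Ω → ℝ} (hX : Integrable X μ)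
    (hY : Integrable Y μ) (hXY : Integrable (fun ω => X ω * Y ω) μ) :
    cov (fun ω => 1 - X ω) (fun ω => 1 - Y ω) μ = cov X Y μ := by
  have hexpand : (fun ω => (1 - X ω) * (1 - Y ω)) = fun ω => 1 - X ω - Y ω + X ω * Y ω := by
    ext ω; ring
  have h1X : Integrable (fun ω => 1 - X ω) μ := (integrable_const 1).sub hX
  have h1XY : Integrable (fun ω => 1 - X ω - Y ω) μ := h1X.sub hY
  simp only [cov, hexpand, integral_one_sub hX, integral_one_sub hY]
  rw [integral_add h1XY hXY, integral_sub h1X hY, integral_one_sub hX]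
  ring

variable {X₁ X₂ Y₁ Y₂ : Ω → ℝ}

lemma ProbabilityTheory.IndepFun.integrable_mul_mul
    (hindep : IndepFun (fun ω => (X₁ ω, X₂ ω)) (fun ω => (Y₁ ω, Y₂ ω)) μ)
    (hX : Integrable (fun ω => X₁ ω * X₂ ω) μ) (hY : Integrable (fun ω => Y₁ ω * Y₂ ω) μ) :
    Integrable (fun ω => X₁ ω * Y₁ ω * (X₂ ω * Y₂ ω)) μ := by
  have hmul : Measurable fun p : ℝ × ℝ => p.1 * p.2 := by fun_prop
  have hprod := (hindep.comp hmul hmul).integrable_mul hX hY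
  exact hprod.congr (Filter.Eventually.of_forall fun ω => by
    simp only [Pi.mul_apply, Function.comp_apply]; ring)

lemma ProbabilityTheory.IndepFun.cov_mul_mul
    (hindep : IndepFun (fun ω => (X₁ ω, X₂ ω)) (fun ω => (Y₁ ω, Y₂ ω)) μ)
    (hX₁ : AEStronglyMeasurable X₁ μ) (hX₂ : AEStronglyMeasurable X₂ μ)
    (hY₁ : AEStronglyMeasurable Y₁ μ) (hY₂ : AEStronglyMeasurable Y₂ μ) :
    cov (fun ω => X₁ ω * Y₁ ω) (fun ω => X₂ ω * Y₂ ω) μ =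
      (cov X₁ X₂ μ + (∫ ω, X₁ ω ∂μ) * ∫ ω, X₂ ω ∂μ) *
          (cov Y₁ Y₂ μ + (∫ ω, Y₁ ω ∂μ) * ∫ ω, Y₂ ω ∂μ)
        - (∫ ω, X₁ ω ∂μ) * (∫ ω, X₂ ω ∂μ) * (∫ ω, Y₁ ω ∂μ) * ∫ ω, Y₂ ω ∂μ := by
  have h₁ := (hindep.comp measurable_fst measurable_fst).integral_fun_mul_eq_mul_integral hX₁ hY₁
  have h₂ := (hindep.comp measurable_snd measurable_snd).integral_fun_mul_eq_mul_integral hX₂ hY₂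
  have hmul : Measurable fun p : ℝ × ℝ => p.1 * p.2 := by fun_prop
  have h₁₂ := (hindep.comp hmul hmul).integral_fun_mul_eq_mul_integral
    (hX₁.mul hX₂) (hY₁.mul hY₂)
  simp only [Function.comp_apply] at h₁ h₂ h₁₂
  have hregroup : (fun ω => X₁ ω * Y₁ ω * (X₂ ω * Y₂ ω)) =
      fun ω => X₁ ω * X₂ ω * (Y₁ ω * Y₂ ω) := by
    ext ω; ring
  simp only [cov, hregroup, h₁, h₂, h₁₂]
  ring

lemma ProbabilityTheory.IndepFun.cov_or [IsProbabilityMeasure μ]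
    (hindep : IndepFun (fun ω => (X₁ ω, X₂ ω)) (fun ω => (Y₁ ω, Y₂ ω)) μ)
    (hX₁ : MemLp X₁ 2 μ) (hX₂ : MemLp X₂ 2 μ) (hY₁ : MemLp Y₁ 2 μ) (hY₂ : MemLp Y₂ 2 μ) :
    cov (fun ω => X₁ ω + Y₁ ω - X₁ ω * Y₁ ω) (fun ω => X₂ ω + Y₂ ω - X₂ ω * Y₂ ω) μ =
      (cov X₁ X₂ μ + (1 - ∫ ω, X₁ ω ∂μ) * (1 - ∫ ω, X₂ ω ∂μ)) *
          (cov Y₁ Y₂ μ + (1 - ∫ ω, Y₁ ω ∂μ) * (1 - ∫ ω, Y₂ ω ∂μ))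
        - (1 - ∫ ω, X₁ ω ∂μ) * (1 - ∫ ω, X₂ ω ∂μ) * (1 - ∫ ω, Y₁ ω ∂μ) * (1 - ∫ ω, Y₂ ω ∂μ) := by
  have h1X₁ : MemLp (fun ω => 1 - X₁ ω) 2 μ := (memLp_const 1).sub hX₁
  have h1X₂ : MemLp (fun ω => 1 - X₂ ω) 2 μ := (memLp_const 1).sub hX₂
  have h1Y₁ : MemLp (fun ω => 1 - Y₁ ω) 2 μ := (memLp_const 1).sub hY₁
  have h1Y₂ : MemLp (fun ω => 1 - Y₂ ω) 2 μ := (memLp_const 1).sub hY₂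
  have hcompl : IndepFun (fun ω => (1 - X₁ ω, 1 - X₂ ω)) (fun ω => (1 - Y₁ ω, 1 - Y₂ ω)) μ :=
    have hflip : Measurable fun p : ℝ × ℝ => (1 - p.1, 1 - p.2) := by fun_prop
    hindep.comp hflip hflip
  have hint₁ : Integrable (fun ω => (1 - X₁ ω) * (1 - Y₁ ω)) μ :=
    (hcompl.comp measurable_fst measurable_fst).integrable_mul
      (h1X₁.integrable one_le_two) (h1Y₁.integrable one_le_two)
  have hint₂ : Integrable (fun ω => (1 - X₂ ω) * (1 - Y₂ ω)) μ :=
    (hcompl.comp measurable_snd measurable_snd).integrable_mul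
      (h1X₂.integrable one_le_two) (h1Y₂.integrable one_le_two)
  have hor : ∀ X Y : Ω → ℝ,
      (fun ω => X ω + Y ω - X ω * Y ω) = fun ω => 1 - (1 - X ω) * (1 - Y ω) :=
    fun X Y => funext fun ω => by ring
  rw [hor, hor, cov_one_sub_one_sub hint₁ hint₂
      (hcompl.integrable_mul_mul (h1X₁.integrable_mul h1X₂) (h1Y₁.integrable_mul h1Y₂)),
    hcompl.cov_mul_mul h1X₁.1 h1X₂.1 h1Y₁.1 h1Y₂.1,
    cov_one_sub_one_sub (hX₁.integrable one_le_two) (hX₂.integrable one_le_two)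
      (hX₁.integrable_mul hX₂),
    cov_one_sub_one_sub (hY₁.integrable one_le_two) (hY₂.integrable one_le_two)
      (hY₁.integrable_mul hY₂),
    integral_one_sub (hX₁.integrable one_le_two), integral_one_sub (hX₂.integrable one_le_two),
    integral_one_sub (hY₁.integrable one_le_two), integral_one_sub (hY₂.integrable one_le_two)]

end

theorem two_node_or_covariance_general
    {Ω : Type*} [MeasurableSpace Ω] (μ : Measure Ω) [IsProbabilityMeasure μ]
    (U₁ U₂ V₁ V₂ : Ω → ℝ)
    (hU₁m : MemLp U₁ 2 μ) (hU₂m : MemLp U₂ 2 μ)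
    (hV₁m : MemLp V₁ 2 μ) (hV₂m : MemLp V₂ 2 μ)
    (hindep : IndepFun (fun ω => (U₁ ω, U₂ ω)) (fun ω => (V₁ ω, V₂ ω)) μ)
    (μU μV cU cV : ℝ)
    (hmU₁ : ∫ ω, U₁ ω ∂μ = μU) (hmU₂ : ∫ ω, U₂ ω ∂μ = μU)
    (hmV₁ : ∫ ω, V₁ ω ∂μ = μV) (hmV₂ : ∫ ω, V₂ ω ∂μ = μV)
    (hcU : (∫ ω, U₁ ω * U₂ ω ∂μ) - (∫ ω, U₁ ω ∂μ) * (∫ ω, U₂ ω ∂μ) = cU)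
    (hcV : (∫ ω, V₁ ω * V₂ ω ∂μ) - (∫ ω, V₁ ω ∂μ) * (∫ ω, V₂ ω ∂μ) = cV)
    (W₁ W₂ : Ω → ℝ)
    (hW₁ : ∀ ω, W₁ ω = U₁ ω + V₁ ω - U₁ ω * V₁ ω)
    (hW₂ : ∀ ω, W₂ ω = U₂ ω + V₂ ω - U₂ ω * V₂ ω) :
    (∫ ω, W₁ ω * W₂ ω ∂μ) - (∫ ω, W₁ ω ∂μ) * (∫ ω, W₂ ω ∂μ)
      = cU * cV + cU * (1 - μV) ^ 2 + cV * (1 - μU) ^ 2 := by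
  change cov W₁ W₂ μ = _
  rw [funext hW₁, funext hW₂, hindep.cov_or hU₁m hU₂m hV₁m hV₂m,
    show cov U₁ U₂ μ = cU from hcU, show cov V₁ V₂ μ = cV from hcV, hmU₁, hmU₂, hmV₁, hmV₂]
  ring

/-- Two-node busy-period formula: for `{0,1}`-valued `U₁, U₂, V₁, V₂` with
`(U₁, U₂)` independent of `(V₁, V₂)`, means `μ_U`, `μ_V`, covariances `c_U`, `c_V`,
the logical OR `W_i = U_i + V_i − U_i V_i` satisfies
`Cov(W₁, W₂) = c_U c_V + c_U (1 − μ_V)² + c_V (1 − μ_U)²`. -/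
theorem two_node_or_covariance
    {Ω : Type*} [MeasurableSpace Ω] (μ : Measure Ω) [IsProbabilityMeasure μ]
    (U₁ U₂ V₁ V₂ : Ω → ℝ)
    (hU₁ : ∀ ω, U₁ ω = 0 ∨ U₁ ω = 1) (hU₂ : ∀ ω, U₂ ω = 0 ∨ U₂ ω = 1)
    (hV₁ : ∀ ω, V₁ ω = 0 ∨ V₁ ω = 1) (hV₂ : ∀ ω, V₂ ω = 0 ∨ V₂ ω = 1)
    (hU₁m : MemLp U₁ 2 μ) (hU₂m : MemLp U₂ 2 μ)
    (hV₁m : MemLp V₁ 2 μ) (hV₂m : MemLp V₂ 2 μ)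
    (hindep : IndepFun (fun ω => (U₁ ω, U₂ ω)) (fun ω => (V₁ ω, V₂ ω)) μ)
    (μU μV cU cV : ℝ)
    (hmU₁ : ∫ ω, U₁ ω ∂μ = μU) (hmU₂ : ∫ ω, U₂ ω ∂μ = μU)
    (hmV₁ : ∫ ω, V₁ ω ∂μ = μV) (hmV₂ : ∫ ω, V₂ ω ∂μ = μV)
    (hcU : (∫ ω, U₁ ω * U₂ ω ∂μ) - (∫ ω, U₁ ω ∂μ) * (∫ ω, U₂ ω ∂μ) = cU)
    (hcV : (∫ ω, V₁ ω * V₂ ω ∂μ) - (∫ ω, V₁ ω ∂μ) * (∫ ω, V₂ ω ∂μ) = cV)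
    (W₁ W₂ : Ω → ℝ)
    (hW₁ : ∀ ω, W₁ ω = U₁ ω + V₁ ω - U₁ ω * V₁ ω)
    (hW₂ : ∀ ω, W₂ ω = U₂ ω + V₂ ω - U₂ ω * V₂ ω) :
    (∫ ω, W₁ ω * W₂ ω ∂μ) - (∫ ω, W₁ ω ∂μ) * (∫ ω, W₂ ω ∂μ)
      = cU * cV + cU * (1 - μV) ^ 2 + cV * (1 - μU) ^ 2 :=
  two_node_or_covariance_general μ U₁ U₂ V₁ V₂ hU₁m hU₂m hV₁m hV₂m hindep μU μV cU cV hmU₁ hmU₂ hmV₁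
    hmV₂ hcU hcV W₁ W₂ hW₁ hW₂
end

section
/- Let H ∈ (1/2, 1), σ² > 0, and μ_U, μ_V ∈ [0, 1]. Let c_U, c_V : ℕ → ℝ be sequences (autocovariances of two independent stationary busy-period processes) such that c_U(τ)·τ^{2−2H} → σ² and c_V(τ)·τ^{2−2H} → 0 as τ → ∞, and define c_W(τ) = c_U(τ)·c_V(τ) + c_U(τ)·(1 − μ_V)² + c_V(τ)·(1 − μ_U)². Then c_W(τ)·τ^{2−2H} → σ²·(1 − μ_V)² as τ → ∞. In particular, for cross traffic streams characterized by different Hurst parameters, the component with the largest Hurst parameter dominates the covariance of the end-to-end observation: c_W(τ) ∼ (1 − μ_V)²·σ²·τ^{2H−2}. -/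
open Filter Topology Real

/- Since `2 - 2H > 0`, the hypothesis on `c_V` forces `c_V(τ) → 0`, so the cross term
`c_U c_V τ^{2-2H}` vanishes in the limit and only `c_U (1 - μ_V)² τ^{2-2H}` survives. -/

theorem tendsto_zero_of_tendsto_mul_rpow {c : ℕ → ℝ} {p L : ℝ} (hp : 0 < p)
    (hc : Tendsto (fun n : ℕ => c n * (n : ℝ) ^ p) atTop (𝓝 L)) :
    Tendsto c atTop (𝓝 0) := by
  have hdecay : Tendsto (fun n : ℕ => (n : ℝ) ^ (-p)) atTop (𝓝 0) :=
    (tendsto_rpow_neg_atTop hp).comp tendsto_natCast_atTop_atTop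
  have hprod := hc.mul hdecay
  rw [mul_zero] at hprod
  refine hprod.congr' ?_
  filter_upwards [eventually_ge_atTop 1] with n hn
  have hn0 : (0 : ℝ) < n := by exact_mod_cast hn
  rw [mul_assoc, ← rpow_add hn0, add_neg_cancel, rpow_zero, mul_one]

theorem largest_hurst_dominates_general
    (H : ℝ) (hH : H ∈ Set.Ioo (1 / 2 : ℝ) 1)
    (σsq : ℝ)
    (μU μV : ℝ)
    (cU cV cW : ℕ → ℝ)
    (hU : Tendsto (fun τ : ℕ => cU τ * (τ : ℝ) ^ (2 - 2 * H)) atTop (𝓝 σsq))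
    (hV : Tendsto (fun τ : ℕ => cV τ * (τ : ℝ) ^ (2 - 2 * H)) atTop (𝓝 0))
    (hW : ∀ τ, cW τ = cU τ * cV τ + cU τ * (1 - μV) ^ 2 + cV τ * (1 - μU) ^ 2) :
    Tendsto (fun τ : ℕ => cW τ * (τ : ℝ) ^ (2 - 2 * H)) atTop
      (𝓝 (σsq * (1 - μV) ^ 2)) := by
  have hcV : Tendsto cV atTop (𝓝 0) :=
    tendsto_zero_of_tendsto_mul_rpow (by linarith [hH.2]) hV
  have hlim := ((hU.mul hcV).add (hU.mul_const ((1 - μV) ^ 2))).add (hV.mul_const ((1 - μU) ^ 2))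
  rw [mul_zero, zero_mul, zero_add, add_zero] at hlim
  refine hlim.congr fun τ => ?_
  rw [hW τ]
  ring

/-- Dominance of the largest Hurst parameter: if `c_U(τ) τ^{2−2H} → σ²` and
`c_V(τ) τ^{2−2H} → 0` as `τ → ∞`, then the end-to-end covariance
`c_W(τ) = c_U c_V + c_U (1−μ_V)² + c_V (1−μ_U)²` satisfies
`c_W(τ) τ^{2−2H} → σ² (1−μ_V)²`, i.e. `c_W(τ) ∼ (1−μ_V)² σ² τ^{2H−2}`. -/
theorem largest_hurst_dominates
    (H : ℝ) (hH : H ∈ Set.Ioo (1 / 2 : ℝ) 1)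
    (σsq : ℝ) (hσ : 0 < σsq)
    (μU μV : ℝ) (hμU : μU ∈ Set.Icc (0 : ℝ) 1) (hμV : μV ∈ Set.Icc (0 : ℝ) 1)
    (cU cV cW : ℕ → ℝ)
    (hU : Tendsto (fun τ : ℕ => cU τ * (τ : ℝ) ^ (2 - 2 * H)) atTop (𝓝 σsq))
    (hV : Tendsto (fun τ : ℕ => cV τ * (τ : ℝ) ^ (2 - 2 * H)) atTop (𝓝 0))
    (hW : ∀ τ, cW τ = cU τ * cV τ + cU τ * (1 - μV) ^ 2 + cV τ * (1 - μU) ^ 2) :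
    Tendsto (fun τ : ℕ => cW τ * (τ : ℝ) ^ (2 - 2 * H)) atTop
      (𝓝 (σsq * (1 - μV) ^ 2)) :=
  largest_hurst_dominates_general H hH σsq μU μV cU cV cW hU hV hW
end
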